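/- arXiv:1105.0585 — 3 statements merged into one kernel-verified Lean document; each statement's English description precedes it below -/
import Mathlib

section
/- For every real ν > 0 and every real u with 0 < u < 1/(1−q), the first q-Bessel function satisfies ∂^q_u ( u^{ν} J^{(1)}_ν(u|q²) ) = u^{ν} J^{(1)}_{ν−1}(u|q²). -/
open scoped BigOperators

noncomputable section

/-- The q-number `[u]_q = (q^u - 1)/(q - 1)`. -/
def qNum (q u : ℝ) : ℝ := (q ^ u - 1) / (q - 1)

/-- The q-factorial `[n]_q! = ∏_{i=1}^n [i]_q`. -/
def qFact (q : ℝ) (n : ℕ) : ℝ := ∏ i ∈ Finset.range n, qNum q ((i : ℝ) + 1)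

/-- The q-Gamma function `Γ_q(t) = (1-q)^{1-t} ∏_{k=0}^∞ (1-q^{k+1})/(1-q^{k+t})`. -/
def qGamma (q t : ℝ) : ℝ :=
  (1 - q) ^ (1 - t) * ∏' k : ℕ, (1 - q ^ (k + 1)) / (1 - q ^ ((k : ℝ) + t))

/-- The q-derivative `∂^q_t f(t) = (f(qt) - f(t))/((q-1)t)`.
The `q⁻¹`-derivative is `qDeriv q⁻¹`. -/
def qDeriv (q : ℝ) (f : ℝ → ℝ) (t : ℝ) : ℝ := (f (q * t) - f t) / ((q - 1) * t)

/-- The q-Pochhammer symbol `(a; q)_k = ∏_{l=0}^{k-1} (1 - a q^l)`. -/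
def qPoch (a q : ℝ) (k : ℕ) : ℝ := ∏ l ∈ Finset.range k, (1 - a * q ^ l)

/-- The q-exponential `E_q(t) = ∑_{j=0}^∞ q^{j(j-1)/2} t^j/[j]_q!`. -/
def qExpE (q t : ℝ) : ℝ := ∑' j : ℕ, q ^ (j * (j - 1) / 2) * t ^ j / qFact q j

/-- `e_q(-u) := 1/E_q(u)` (intended for `u ≥ 0`); `qExpe q u` denotes `e_q(-u)`. -/
def qExpe (q u : ℝ) : ℝ := (qExpE q u)⁻¹

/-- The first q-Bessel function `J^{(1)}_ν(x|q²)`. -/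
def qBessel1 (q ν x : ℝ) : ℝ :=
  (x / (1 + q)) ^ ν *
    ∑' i : ℕ, (-1 : ℝ) ^ i / (qFact (q ^ 2) i * qGamma (q ^ 2) ((i : ℝ) + ν + 1)) *
      (x / (1 + q)) ^ (2 * i)

/-- The second q-Bessel function `J^{(2)}_ν(x|q²)`. -/
def qBessel2 (q ν x : ℝ) : ℝ :=
  q ^ (ν ^ 2) * (x / (1 + q)) ^ ν *
    ∑' i : ℕ, q ^ (2 * (i : ℝ) * ((i : ℝ) + ν)) * (-1 : ℝ) ^ i /
        (qFact (q ^ 2) i * qGamma (q ^ 2) ((i : ℝ) + ν + 1)) *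
      (x / (1 + q)) ^ (2 * i)

/-- The q-Laguerre polynomial `𝓛^{(α)}_j(u|q²)`. -/
def qLaguerre (q α : ℝ) (j : ℕ) (u : ℝ) : ℝ :=
  ∑ i ∈ Finset.range (j + 1),
    q ^ ((j - i) * (j - i + 1)) * (-u) ^ i / (qFact (q ^ 2) (j - i) * qFact (q ^ 2) i) *
      (qPoch (q ^ (2 * (i : ℝ) + 2 * α + 2)) (q ^ 2) (j - i) / (1 - q ^ 2) ^ (j - i))

/-- The q-Laguerre polynomial `𝓛^{(α)}_j(u|q^{-2})`. -/
def qLaguerreInv (q α : ℝ) (j : ℕ) (u : ℝ) : ℝ :=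
  q ^ (-(j : ℝ) * ((j : ℝ) + 1 + 2 * α)) *
    ∑ i ∈ Finset.range (j + 1),
      q ^ (2 * (i : ℝ) * ((i : ℝ) + α)) * (-u) ^ i / (qFact (q ^ 2) (j - i) * qFact (q ^ 2) i) *
        (qPoch (q ^ (2 * (i : ℝ) + 2 * α + 2)) (q ^ 2) (j - i) / (1 - q ^ 2) ^ (j - i))

/-- The finite Jackson q-integral `∫_0^a f(t) d_q t = (1-q) a ∑_{k=0}^∞ f(q^k a) q^k`. -/
def jackson (q a : ℝ) (f : ℝ → ℝ) : ℝ := (1 - q) * a * ∑' k : ℕ, f (q ^ k * a) * q ^ k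

/-- The infinite Jackson q-integral `∫_0^{γ·∞} f(t) d_q t = (1-q) γ ∑_{k=-∞}^∞ f(q^k γ) q^k`. -/
def jacksonInf (q γ : ℝ) (f : ℝ → ℝ) : ℝ := (1 - q) * γ * ∑' k : ℤ, f (q ^ k * γ) * q ^ k

/-- The first q-Hankel transform `𝓗̄^{q,β}_ν`. -/
def hankel1 (q μ ν β : ℝ) (f : ℝ → ℝ) (t : ℝ) : ℝ :=
  (1 + q) / μ * jackson q (Real.sqrt (μ / ((1 - q ^ 2) * β)))
    (fun r => qBessel1 q ν ((1 + q) / μ * (r * t)) / (r * t) ^ ν * r ^ (2 * ν + 1) * f r)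

/-- The second q-Hankel transform `𝓗^{q,γ}_ν`. -/
def hankel2 (q μ ν γ : ℝ) (f : ℝ → ℝ) (r : ℝ) : ℝ :=
  (1 + q) / μ * jacksonInf q γ
    (fun t => qBessel2 q ν (q * ((1 + q) / μ) * (r * t)) / (r * t) ^ ν * t ^ (2 * ν + 1) * f t)

/-! Put `X = x/(1+q)` and `p = q²`, so that `J^{(1)}_ν(x|q²) = X^ν ∑ a_i(ν) X^{2i}`. Replacing `u`
by `qu` multiplies the `i`-th term of `u^ν J^{(1)}_ν(u|q²)` by `p^{i+ν}`, and the functional equation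
`Γ_p(t+1) = [t]_p Γ_p(t)` turns `a_i(ν) (p^{i+ν} - 1)` into `(p - 1) a_i(ν-1)`. Subtracting the series
termwise is legitimate because they converge absolutely for `(1-p) X < 1`, by the lower bounds
`[i]_p! ≥ (p;p)_∞ (1-p)^{-i}` and `Γ_p(t) ≥ (p;p)_∞ (1-p)^{1-t}`. -/

open Real Finset

/-- `qPochInf p t` is the infinite q-Pochhammer symbol `(p^t; p)_∞`. -/
def qPochInf (p t : ℝ) : ℝ := ∏' k : ℕ, (1 - p ^ ((k : ℝ) + t))

section QPochhammer

variable {p : ℝ}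

lemma summable_rpow_natCast_add (hp0 : 0 < p) (hp1 : p < 1) (t : ℝ) :
    Summable fun k : ℕ => p ^ ((k : ℝ) + t) := by
  simpa [rpow_add hp0, rpow_natCast] using
    (summable_geometric_of_lt_one hp0.le hp1).mul_right (p ^ t)

lemma summable_log_one_sub_rpow_natCast_add (hp0 : 0 < p) (hp1 : p < 1) (t : ℝ) :
    Summable fun k : ℕ => log (1 - p ^ ((k : ℝ) + t)) := by
  simpa [sub_eq_add_neg] using
    Real.summable_log_one_add_of_summable (summable_rpow_natCast_add hp0 hp1 t).neg

lemma multipliable_one_sub_rpow_natCast_add (hp0 : 0 < p) (hp1 : p < 1) (t : ℝ) :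
    Multipliable fun k : ℕ => 1 - p ^ ((k : ℝ) + t) := by
  simpa [sub_eq_add_neg] using
    Real.multipliable_one_add_of_summable (summable_rpow_natCast_add hp0 hp1 t).neg

lemma one_sub_rpow_natCast_add_pos (hp0 : 0 < p) (hp1 : p < 1) {t : ℝ} (ht : 0 < t) (k : ℕ) :
    0 < 1 - p ^ ((k : ℝ) + t) :=
  sub_pos.2 (rpow_lt_one hp0.le hp1 (by positivity))

lemma qPochInf_eq_exp_tsum_log (hp0 : 0 < p) (hp1 : p < 1) {t : ℝ} (ht : 0 < t) :
    qPochInf p t = exp (∑' k : ℕ, log (1 - p ^ ((k : ℝ) + t))) :=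
  (rexp_tsum_eq_tprod (one_sub_rpow_natCast_add_pos hp0 hp1 ht)
    (summable_log_one_sub_rpow_natCast_add hp0 hp1 t)).symm

lemma qPochInf_pos (hp0 : 0 < p) (hp1 : p < 1) {t : ℝ} (ht : 0 < t) : 0 < qPochInf p t := by
  rw [qPochInf_eq_exp_tsum_log hp0 hp1 ht]
  exact exp_pos _

lemma qPochInf_le_one (hp0 : 0 < p) (hp1 : p < 1) {t : ℝ} (ht : 0 < t) : qPochInf p t ≤ 1 := by
  rw [qPochInf_eq_exp_tsum_log hp0 hp1 ht, exp_le_one_iff]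
  refine tsum_nonpos fun k => log_nonpos (one_sub_rpow_natCast_add_pos hp0 hp1 ht k).le ?_
  linarith [rpow_nonneg hp0.le ((k : ℝ) + t)]

lemma qPochInf_eq_prod_mul (hp0 : 0 < p) (hp1 : p < 1) (t : ℝ) (n : ℕ) :
    qPochInf p t = (∏ k ∈ range n, (1 - p ^ ((k : ℝ) + t))) * qPochInf p (t + n) := by
  have hshift (k : ℕ) : ((k + n : ℕ) : ℝ) + t = k + (t + n) := by push_cast; ring
  rw [qPochInf, qPochInf, ← Multipliable.prod_mul_tprod_nat_mul'
    (f := fun k : ℕ => 1 - p ^ ((k : ℝ) + t)) (k := n)]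
  · simp only [hshift]
  · simpa only [hshift] using multipliable_one_sub_rpow_natCast_add hp0 hp1 (t + n)

end QPochhammer

section QGamma

variable {p : ℝ}

lemma qGamma_eq (hp0 : 0 < p) (hp1 : p < 1) {t : ℝ} (ht : 0 < t) :
    qGamma p t = (1 - p) ^ (1 - t) * (qPochInf p 1 / qPochInf p t) := by
  rw [qGamma, qPochInf, qPochInf, ← Multipliable.tprod_div₀
    (multipliable_one_sub_rpow_natCast_add hp0 hp1 1)
    (multipliable_one_sub_rpow_natCast_add hp0 hp1 t) (qPochInf_pos hp0 hp1 ht).ne']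
  congr! 3 with k
  rw [← rpow_natCast]
  push_cast
  rfl

lemma qGamma_pos (hp0 : 0 < p) (hp1 : p < 1) {t : ℝ} (ht : 0 < t) : 0 < qGamma p t := by
  have := qPochInf_pos hp0 hp1 one_pos
  have := qPochInf_pos hp0 hp1 ht
  have : 0 < 1 - p := sub_pos.2 hp1
  rw [qGamma_eq hp0 hp1 ht]
  positivity

lemma qPochInf_one_le_rpow_mul_qGamma (hp0 : 0 < p) (hp1 : p < 1) {t : ℝ} (ht : 0 < t) :
    qPochInf p 1 ≤ (1 - p) ^ (t - 1) * qGamma p t := by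
  have h1 := qPochInf_pos hp0 hp1 one_pos
  have ht0 := qPochInf_pos hp0 hp1 ht
  have hp : 0 < 1 - p := sub_pos.2 hp1
  rw [qGamma_eq hp0 hp1 ht, ← mul_assoc, ← rpow_add hp, show t - 1 + (1 - t) = 0 by ring,
    rpow_zero, one_mul, le_div_iff₀ ht0]
  exact mul_le_of_le_one_right h1.le (qPochInf_le_one hp0 hp1 ht)

lemma qGamma_add_one (hp0 : 0 < p) (hp1 : p < 1) {t : ℝ} (ht : 0 < t) :
    qGamma p (t + 1) = qNum p t * qGamma p t := by
  have hrec := qPochInf_eq_prod_mul hp0 hp1 t 1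
  simp only [range_one, prod_singleton, Nat.cast_zero, zero_add, Nat.cast_one] at hrec
  have h1 := qPochInf_pos hp0 hp1 (t := t + 1) (by linarith)
  have hpt : 0 < 1 - p ^ t := sub_pos.2 (rpow_lt_one hp0.le hp1 ht)
  have hp : 0 < 1 - p := sub_pos.2 hp1
  have hp' : p - 1 ≠ 0 := by linarith
  rw [qGamma_eq hp0 hp1 (by linarith), qGamma_eq hp0 hp1 ht, hrec, qNum,
    show 1 - t = (1 - (t + 1)) + 1 by ring, rpow_add_one hp.ne']
  field_simp
  ring

end QGamma

section QFactorial

variable {p : ℝ}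

lemma qNum_eq_one_sub_div (u : ℝ) : qNum p u = (1 - p ^ u) / (1 - p) := by
  rw [qNum, ← neg_div_neg_eq, neg_sub, neg_sub]

lemma qFact_eq_prod_div (n : ℕ) :
    qFact p n = (∏ k ∈ range n, (1 - p ^ ((k : ℝ) + 1))) / (1 - p) ^ n := by
  simp only [qFact, qNum_eq_one_sub_div, prod_div_distrib, prod_const, card_range]

lemma qFact_pos (hp0 : 0 < p) (hp1 : p < 1) (n : ℕ) : 0 < qFact p n := by
  rw [qFact_eq_prod_div]
  have : 0 < 1 - p := sub_pos.2 hp1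
  exact div_pos (prod_pos fun k _ => one_sub_rpow_natCast_add_pos hp0 hp1 one_pos k) (by positivity)

lemma qPochInf_one_le_pow_mul_qFact (hp0 : 0 < p) (hp1 : p < 1) (n : ℕ) :
    qPochInf p 1 ≤ (1 - p) ^ n * qFact p n := by
  have : 0 < 1 - p := sub_pos.2 hp1
  rw [qFact_eq_prod_div, mul_div_cancel₀ _ (by positivity), qPochInf_eq_prod_mul hp0 hp1 1 n]
  exact mul_le_of_le_one_right
    (prod_nonneg fun k _ => (one_sub_rpow_natCast_add_pos hp0 hp1 one_pos k).le)
    (qPochInf_le_one hp0 hp1 (by positivity))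

end QFactorial

section QBesselSeries

def qBesselCoeff (p ν : ℝ) (i : ℕ) : ℝ :=
  (-1 : ℝ) ^ i / (qFact p i * qGamma p ((i : ℝ) + ν + 1))

def qBesselSeries (p ν x : ℝ) : ℝ := ∑' i : ℕ, qBesselCoeff p ν i * x ^ (2 * i)

lemma qBessel1_eq (q ν x : ℝ) :
    qBessel1 q ν x = (x / (1 + q)) ^ ν * qBesselSeries (q ^ 2) ν (x / (1 + q)) :=
  rfl

variable {p ν : ℝ}

lemma abs_qBesselCoeff_le (hp0 : 0 < p) (hp1 : p < 1) (hν : -1 < ν) (i : ℕ) :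
    |qBesselCoeff p ν i| ≤ (1 - p) ^ ν / qPochInf p 1 ^ 2 * ((1 - p) ^ 2) ^ i := by
  have hp : 0 < 1 - p := sub_pos.2 hp1
  have ht : 0 < (i : ℝ) + ν + 1 := by linarith [i.cast_nonneg (α := ℝ)]
  have hc := qPochInf_pos hp0 hp1 one_pos
  have hF := qFact_pos hp0 hp1 i
  have hG := qGamma_pos hp0 hp1 ht
  have hFc := qPochInf_one_le_pow_mul_qFact hp0 hp1 i
  have hGc := qPochInf_one_le_rpow_mul_qGamma hp0 hp1 ht
  rw [show (i : ℝ) + ν + 1 - 1 = i + ν by ring, rpow_add hp, rpow_natCast] at hGc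
  have hb : 0 < (1 - p) ^ ν := rpow_pos_of_pos hp ν
  rw [qBesselCoeff, abs_div, abs_pow, abs_neg, abs_one, one_pow, abs_of_pos (by positivity)]
  calc 1 / (qFact p i * qGamma p ((i : ℝ) + ν + 1))
      = (1 - p) ^ ν * ((1 - p) ^ i) ^ 2 / (((1 - p) ^ i * qFact p i) *
          ((1 - p) ^ i * (1 - p) ^ ν * qGamma p ((i : ℝ) + ν + 1))) := by
        field_simp
    _ ≤ (1 - p) ^ ν * ((1 - p) ^ i) ^ 2 / (qPochInf p 1 * qPochInf p 1) := by
        gcongr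
    _ = (1 - p) ^ ν / qPochInf p 1 ^ 2 * ((1 - p) ^ 2) ^ i := by rw [pow_right_comm]; ring

lemma summable_qBesselCoeff_mul_pow (hp0 : 0 < p) (hp1 : p < 1) (hν : -1 < ν) {x : ℝ}
    (hx : (1 - p) * |x| < 1) : Summable fun i => qBesselCoeff p ν i * x ^ (2 * i) := by
  have hr : (1 - p) ^ 2 * x ^ 2 < 1 := by
    rw [← sq_abs x, ← mul_pow]
    exact pow_lt_one₀ (mul_nonneg (sub_pos.2 hp1).le (abs_nonneg x)) hx two_ne_zero
  refine Summable.of_norm_bounded ((summable_geometric_of_lt_one (by positivity) hr).mul_left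
    ((1 - p) ^ ν / qPochInf p 1 ^ 2)) fun i => ?_
  rw [norm_mul, norm_pow, Real.norm_eq_abs, Real.norm_eq_abs, pow_mul, sq_abs, mul_pow,
    ← mul_assoc]
  exact mul_le_mul_of_nonneg_right (abs_qBesselCoeff_le hp0 hp1 hν i) (by positivity)

lemma qBesselCoeff_mul_rpow_sub_one (hp0 : 0 < p) (hp1 : p < 1) (hν : 0 < ν) (i : ℕ) :
    qBesselCoeff p ν i * (p ^ ((i : ℝ) + ν) - 1) = (p - 1) * qBesselCoeff p (ν - 1) i := by
  have ht : 0 < (i : ℝ) + ν := by positivity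
  have hpt : p ^ ((i : ℝ) + ν) - 1 ≠ 0 := (sub_neg.2 (rpow_lt_one hp0.le hp1 ht)).ne
  have hp : p - 1 ≠ 0 := by linarith
  have hF := (qFact_pos hp0 hp1 i).ne'
  have hG := (qGamma_pos hp0 hp1 ht).ne'
  rw [qBesselCoeff, qBesselCoeff, show (i : ℝ) + (ν - 1) + 1 = i + ν by ring,
    qGamma_add_one hp0 hp1 ht, qNum]
  field_simp

lemma rpow_mul_qBesselSeries_mul_sub_qBesselSeries {q : ℝ} (hq0 : 0 < q) (hq1 : q < 1)
    (hν : 0 < ν) {x : ℝ} (hx : (1 - q ^ 2) * |x| < 1) :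
    (q ^ 2) ^ ν * qBesselSeries (q ^ 2) ν (q * x) - qBesselSeries (q ^ 2) ν x =
      (q ^ 2 - 1) * qBesselSeries (q ^ 2) (ν - 1) x := by
  have hp0 : 0 < q ^ 2 := by positivity
  have hp1 : q ^ 2 < 1 := pow_lt_one₀ hq0.le hq1 two_ne_zero
  have hqx : (1 - q ^ 2) * |q * x| < 1 := by
    rw [abs_mul, abs_of_pos hq0, mul_left_comm]
    nlinarith [mul_nonneg (sub_pos.2 hp1).le (abs_nonneg x)]
  have hS := summable_qBesselCoeff_mul_pow (ν := ν) hp0 hp1 (by linarith) hx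
  have hSq := summable_qBesselCoeff_mul_pow (ν := ν) hp0 hp1 (by linarith) hqx
  rw [qBesselSeries, qBesselSeries, qBesselSeries, ← tsum_mul_left,
    ← (hSq.mul_left _).tsum_sub hS, ← tsum_mul_left]
  refine tsum_congr fun i => ?_
  calc (q ^ 2) ^ ν * (qBesselCoeff (q ^ 2) ν i * (q * x) ^ (2 * i)) -
        qBesselCoeff (q ^ 2) ν i * x ^ (2 * i)
      = qBesselCoeff (q ^ 2) ν i * ((q ^ 2) ^ ((i : ℝ) + ν) - 1) * x ^ (2 * i) := by
        rw [mul_pow, pow_mul q, rpow_add hp0, rpow_natCast]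
        ring
    _ = (q ^ 2 - 1) * (qBesselCoeff (q ^ 2) (ν - 1) i * x ^ (2 * i)) := by
        rw [qBesselCoeff_mul_rpow_sub_one hp0 hp1 hν]
        ring

end QBesselSeries

/-- `∂^q_u (u^ν J^{(1)}_ν(u|q²)) = u^ν J^{(1)}_{ν-1}(u|q²)`
for `ν > 0` and `0 < u < 1/(1-q)`. -/
theorem qBessel1_qDeriv_mul (q : ℝ) (hq0 : 0 < q) (hq1 : q < 1)
    (ν : ℝ) (hν : ν > 0) (u : ℝ) (hu0 : 0 < u) (hu1 : u < 1 / (1 - q)) :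
    qDeriv q (fun s => s ^ ν * qBessel1 q ν s) u = u ^ ν * qBessel1 q (ν - 1) u := by
  have hq : 0 < 1 + q := by linarith
  obtain ⟨X, hX, rfl⟩ : ∃ X, 0 < X ∧ u = (1 + q) * X :=
    ⟨u / (1 + q), div_pos hu0 hq, by field_simp⟩
  have hXq : (1 - q ^ 2) * |X| < 1 := by
    rw [abs_of_pos hX, show (1 - q ^ 2) * X = (1 - q) * ((1 + q) * X) by ring]
    rwa [lt_div_iff₀ (sub_pos.2 hq1), mul_comm] at hu1
  have hshift := rpow_mul_qBesselSeries_mul_sub_qBesselSeries hq0 hq1 hν hXq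
  have hqq : (q ^ 2) ^ ν = q ^ ν * q ^ ν := by rw [sq, mul_rpow hq0.le hq0.le]
  rw [hqq] at hshift
  have hqm1 : q - 1 ≠ 0 := by linarith
  rw [qDeriv, qBessel1_eq, qBessel1_eq, qBessel1_eq, mul_left_comm q (1 + q) X,
    mul_div_cancel_left₀ _ hq.ne', mul_div_cancel_left₀ _ hq.ne']
  simp only [mul_rpow hq.le hX.le, mul_rpow hq.le (mul_pos hq0 hX).le, mul_rpow hq0.le hX.le,
    rpow_sub_one hX.ne']
  field_simp
  linear_combination hshift
end
end

section
/- For every real ν > 0 and every real u > 0, the second q-Bessel function satisfies ∂^q_u ( u^{ν+1} J^{(2)}_{ν−1}(u|q²) ) = [2ν]_q · u^{ν} J^{(2)}_{ν−1}(u|q²) − q^{ν+1} u^{ν+1} J^{(2)}_ν(qu|q²). -/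
open scoped BigOperators

noncomputable section

/-!
Write `J^{(2)}_α(x|q²) = q^{α²} X^α S_α(X²)` with `X = x/(1+q)`. In the `(j+1)`-st coefficient of
`S_{ν-1}` the factor `[j+1]_{q²}` cancels against `(q²)^{j+1} - 1`, and what remains is
`(1 - q²) q^{2ν}` times the `j`-th coefficient of `S_ν` shifted by `q²`; this gives
`S_{ν-1}(q²y) - S_{ν-1}(y) = (1 - q²) q^{2ν} y S_ν(q²y)`, i.e.
`J_{ν-1}(qu) = q^{ν-1} J_{ν-1}(u) + (1 - q) u J_ν(qu)`, and the formula for the `q`-derivative is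
a rearrangement of this. The series converge because `Γ_{q²}` is bounded below by a positive
constant on `[α + 1, ∞)`, which follows from Bernoulli's inequality applied to each factor of its
product.
-/

open Real Filter

lemma le_tprod_of_le_prod' {ι α : Type*} [Preorder α] [CommMonoid α] [TopologicalSpace α]
    [ClosedIciTopology α] {f : ι → α} {c : α} (hc : c ≤ 1) (h : ∀ s, c ≤ ∏ i ∈ s, f i) :
    c ≤ ∏' i, f i := by
  by_cases hf : Multipliable f
  · exact le_hasProd_of_le_prod hf.hasProd h
  · rwa [tprod_eq_one_of_not_multipliable hf]

lemma summable_pow_self_of_tendsto_zero {c : ℕ → ℝ} (hc : Tendsto c atTop (nhds 0)) :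
    Summable fun i => c i ^ i := by
  have hsmall : ∀ᶠ i in atTop, ‖c i‖ ≤ 1 / 2 :=
    (tendsto_zero_iff_norm_tendsto_zero.1 hc).eventually (ge_mem_nhds (by norm_num))
  refine Summable.of_norm_bounded_eventually
    (summable_geometric_of_lt_one (by norm_num : (0 : ℝ) ≤ 1 / 2) (by norm_num)) ?_
  rw [Nat.cofinite_eq_atTop]
  filter_upwards [hsmall] with i hi
  rw [norm_pow]
  exact pow_le_pow_left₀ (norm_nonneg _) hi i

section

variable {Q : ℝ}

/-- By Bernoulli's inequality the `k`-th factor is at least `(1 - Q) ^ Q ^ k`, and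
`∑ Q ^ k = (1 - Q)⁻¹`. -/
lemma rpow_inv_one_sub_le_tprod (hQ0 : 0 < Q) (hQ1 : Q < 1) {t : ℝ} (ht : 0 < t) :
    (1 - Q) ^ (1 - Q)⁻¹ ≤ ∏' k : ℕ, (1 - Q ^ (k + 1)) / (1 - Q ^ ((k : ℝ) + t)) := by
  have h1Q : 0 < 1 - Q := by linarith
  have hfactor (k : ℕ) : (1 - Q) ^ (Q ^ k) ≤ (1 - Q ^ (k + 1)) / (1 - Q ^ ((k : ℝ) + t)) := by
    have hden_pos : 0 < 1 - Q ^ ((k : ℝ) + t) :=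
      sub_pos.2 (rpow_lt_one hQ0.le hQ1 (by positivity))
    have hden_le : 1 - Q ^ ((k : ℝ) + t) ≤ 1 := by linarith [rpow_pos_of_pos hQ0 ((k : ℝ) + t)]
    have hnum : 0 ≤ 1 - Q ^ (k + 1) := sub_nonneg.2 (pow_le_one₀ hQ0.le hQ1.le)
    have hbernoulli : (1 + -Q) ^ (Q ^ k) ≤ 1 + Q ^ k * -Q :=
      rpow_one_add_le_one_add_mul_self (by linarith) (by positivity) (pow_le_one₀ hQ0.le hQ1.le)
    calc (1 - Q) ^ (Q ^ k) ≤ 1 - Q ^ (k + 1) := by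
          simpa [pow_succ, sub_eq_add_neg, mul_neg] using hbernoulli
      _ ≤ (1 - Q ^ (k + 1)) / (1 - Q ^ ((k : ℝ) + t)) := le_div_self hnum hden_pos hden_le
  refine le_tprod_of_le_prod' (rpow_le_one h1Q.le (by linarith) (by positivity)) fun s => ?_
  have hgeom : ∑ k ∈ s, Q ^ k ≤ (1 - Q)⁻¹ := by
    rw [← tsum_geometric_of_lt_one hQ0.le hQ1]
    exact (summable_geometric_of_lt_one hQ0.le hQ1).sum_le_tsum s fun k _ => by positivity
  calc (1 - Q) ^ (1 - Q)⁻¹ ≤ (1 - Q) ^ (∑ k ∈ s, Q ^ k) :=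
        rpow_le_rpow_of_exponent_ge h1Q (by linarith) hgeom
    _ = ∏ k ∈ s, (1 - Q) ^ (Q ^ k) := rpow_sum_of_pos h1Q _ _
    _ ≤ _ := Finset.prod_le_prod (fun k _ => by positivity) fun k _ => hfactor k

lemma qGamma_ge (hQ0 : 0 < Q) (hQ1 : Q < 1) {t₀ t : ℝ} (ht₀ : 0 < t₀) (ht : t₀ ≤ t) :
    (1 - Q) ^ (1 - t₀) * (1 - Q) ^ (1 - Q)⁻¹ ≤ qGamma Q t := by
  have h1Q : 0 < 1 - Q := by linarith
  exact mul_le_mul (rpow_le_rpow_of_exponent_ge h1Q (by linarith) (by linarith))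
    (rpow_inv_one_sub_le_tprod hQ0 hQ1 (ht₀.trans_le ht)) (by positivity) (by positivity)

lemma qGamma_pos_s6 (hQ0 : 0 < Q) (hQ1 : Q < 1) {t : ℝ} (ht : 0 < t) : 0 < qGamma Q t := by
  have h1Q : 0 < 1 - Q := by linarith
  exact (by positivity : (0 : ℝ) < (1 - Q) ^ (1 - t) * (1 - Q) ^ (1 - Q)⁻¹).trans_le
    (qGamma_ge hQ0 hQ1 ht le_rfl)

lemma one_le_qNum (hQ0 : 0 < Q) (hQ1 : Q < 1) {u : ℝ} (hu : 1 ≤ u) : 1 ≤ qNum Q u := by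
  have hpow : Q ^ u ≤ Q := by simpa using rpow_le_rpow_of_exponent_ge hQ0 hQ1.le hu
  rw [qNum, le_div_iff_of_neg (by linarith)]
  linarith

lemma one_le_qFact (hQ0 : 0 < Q) (hQ1 : Q < 1) (n : ℕ) : 1 ≤ qFact Q n :=
  Finset.one_le_prod fun i _ => one_le_qNum hQ0 hQ1 (by simp)

lemma qFact_succ (n : ℕ) : qFact Q (n + 1) = qFact Q n * ((Q ^ (n + 1) - 1) / (Q - 1)) := by
  rw [qFact, qFact, Finset.prod_range_succ, qNum, ← Nat.cast_add_one, rpow_natCast]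

end

def qBessel2Coeff (q α : ℝ) (i : ℕ) : ℝ :=
  q ^ (2 * (i : ℝ) * ((i : ℝ) + α)) * (-1 : ℝ) ^ i /
    (qFact (q ^ 2) i * qGamma (q ^ 2) ((i : ℝ) + α + 1))

def qBessel2Series (q α y : ℝ) : ℝ := ∑' i : ℕ, qBessel2Coeff q α i * y ^ i

lemma qBessel2_eq_series (q ν x : ℝ) :
    qBessel2 q ν x = q ^ (ν ^ 2) * (x / (1 + q)) ^ ν * qBessel2Series q ν ((x / (1 + q)) ^ 2) := by
  simp only [qBessel2, qBessel2Series, qBessel2Coeff, pow_mul]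

lemma summable_qBessel2Coeff_mul_pow {q : ℝ} (hq0 : 0 < q) (hq1 : q < 1) {α : ℝ} (hα : -1 < α)
    (y : ℝ) : Summable fun i => qBessel2Coeff q α i * y ^ i := by
  have hQ0 : 0 < q ^ 2 := by positivity
  have hQ1 : q ^ 2 < 1 := by nlinarith
  set c₀ := (1 - q ^ 2) ^ (1 - (α + 1)) * (1 - q ^ 2) ^ (1 - q ^ 2)⁻¹
  have hc₀ : 0 < c₀ := by
    have : 0 < 1 - q ^ 2 := by linarith
    positivity
  have hden (i : ℕ) : c₀ ≤ qFact (q ^ 2) i * qGamma (q ^ 2) ((i : ℝ) + α + 1) := by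
    have hΓ := qGamma_ge hQ0 hQ1 (t := (i : ℝ) + α + 1) (by linarith : 0 < α + 1)
      (by linarith [i.cast_nonneg (α := ℝ)])
    nlinarith [one_le_qFact hQ0 hQ1 i]
  have hgeom : Tendsto (fun i : ℕ => q ^ (2 * α) * |y| * (q ^ 2) ^ i) atTop (nhds 0) := by
    simpa using (tendsto_pow_atTop_nhds_zero_of_lt_one hQ0.le hQ1).const_mul (q ^ (2 * α) * |y|)
  refine Summable.of_norm_bounded ((summable_pow_self_of_tendsto_zero hgeom).mul_left c₀⁻¹)
    fun i => ?_
  have hpow : q ^ (2 * (i : ℝ) * ((i : ℝ) + α)) = (q ^ (2 * α) * (q ^ 2) ^ i) ^ i := by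
    rw [← pow_mul, ← rpow_natCast q (2 * i), ← rpow_add hq0, ← rpow_natCast, ← rpow_mul hq0.le]
    push_cast
    ring_nf
  have hqe : 0 ≤ q ^ (2 * (i : ℝ) * ((i : ℝ) + α)) := by positivity
  rw [qBessel2Coeff, norm_mul, norm_div, norm_mul, norm_pow, norm_pow, norm_neg, norm_one, one_pow,
    mul_one, Real.norm_of_nonneg hqe, Real.norm_of_nonneg (hc₀.le.trans (hden i)), Real.norm_eq_abs]
  calc q ^ (2 * (i : ℝ) * ((i : ℝ) + α)) / (qFact (q ^ 2) i * qGamma (q ^ 2) ((i : ℝ) + α + 1))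
        * |y| ^ i ≤ q ^ (2 * (i : ℝ) * ((i : ℝ) + α)) / c₀ * |y| ^ i := by
          gcongr
          exact hden i
    _ = c₀⁻¹ * (q ^ (2 * α) * |y| * (q ^ 2) ^ i) ^ i := by
          rw [hpow]; ring

lemma qBessel2Coeff_succ_mul {q : ℝ} (hq0 : 0 < q) (hq1 : q ≠ 1) (ν : ℝ) (j : ℕ) :
    qBessel2Coeff q (ν - 1) (j + 1) * ((q ^ 2) ^ (j + 1) - 1) =
      (1 - q ^ 2) * q ^ (2 * ν) * (q ^ 2) ^ j * qBessel2Coeff q ν j := by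
  have hN : (q ^ 2) ^ (j + 1) - 1 ≠ 0 := by
    rw [sub_ne_zero, ← pow_mul, Ne, pow_eq_one_iff_of_nonneg hq0.le (by omega)]
    exact hq1
  have hexp : q ^ (2 * ((j + 1 : ℕ) : ℝ) * (((j + 1 : ℕ) : ℝ) + (ν - 1))) =
      q ^ (2 * ν) * (q ^ 2) ^ j * q ^ (2 * (j : ℝ) * ((j : ℝ) + ν)) := by
    rw [← pow_mul, ← rpow_natCast q (2 * j), ← rpow_add hq0, ← rpow_add hq0]
    push_cast
    ring_nf
  rw [qBessel2Coeff, qBessel2Coeff, qFact_succ, hexp,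
    show ((j + 1 : ℕ) : ℝ) + (ν - 1) + 1 = (j : ℝ) + ν + 1 by push_cast; ring]
  field_simp
  ring

lemma qBessel2Series_sub_one_q_sq_mul {q ν : ℝ} (hq0 : 0 < q) (hq1 : q < 1) (hν : 0 < ν) (y : ℝ) :
    qBessel2Series q (ν - 1) (q ^ 2 * y) =
      qBessel2Series q (ν - 1) y +
        (1 - q ^ 2) * q ^ (2 * ν) * y * qBessel2Series q ν (q ^ 2 * y) := by
  set A := qBessel2Coeff q (ν - 1)
  have hsum (z : ℝ) : Summable fun i => A i * z ^ i :=
    summable_qBessel2Coeff_mul_pow hq0 hq1 (by linarith) z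
  have hdiff : Summable fun i => A i * ((q ^ 2) ^ i - 1) * y ^ i :=
    ((hsum (q ^ 2 * y)).sub (hsum y)).congr fun i => by ring
  have hshift (j : ℕ) : A (j + 1) * ((q ^ 2) ^ (j + 1) - 1) * y ^ (j + 1) =
      (1 - q ^ 2) * q ^ (2 * ν) * y * (qBessel2Coeff q ν j * (q ^ 2 * y) ^ j) := by
    rw [qBessel2Coeff_succ_mul hq0 hq1.ne ν j]
    ring
  rw [qBessel2Series, qBessel2Series, qBessel2Series, ← sub_eq_iff_eq_add',
    ← (hsum _).tsum_sub (hsum y)]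
  calc ∑' i, (A i * (q ^ 2 * y) ^ i - A i * y ^ i)
      = ∑' i, A i * ((q ^ 2) ^ i - 1) * y ^ i := tsum_congr fun i => by ring
    _ = ∑' j, A (j + 1) * ((q ^ 2) ^ (j + 1) - 1) * y ^ (j + 1) := by
        rw [hdiff.tsum_eq_zero_add]
        simp
    _ = _ := by rw [tsum_congr hshift, tsum_mul_left]

lemma qBessel2_sub_one_q_mul {q ν : ℝ} (hq0 : 0 < q) (hq1 : q < 1) (hν : 0 < ν) {u : ℝ}
    (hu : 0 ≤ u) :
    qBessel2 q (ν - 1) (q * u) =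
      q ^ (ν - 1) * qBessel2 q (ν - 1) u + (1 - q) * u * qBessel2 q ν (q * u) := by
  set X := u / (1 + q) with hXdef
  have hX : 0 ≤ X := by positivity
  have hu_eq : u = (1 + q) * X := by rw [hXdef]; field_simp
  have hqX : q * u / (1 + q) = q * X := mul_div_assoc _ _ _
  have hq_exp : q ^ ((ν - 1) ^ 2) * q ^ (ν - 1) * q ^ (2 * ν) = q ^ (ν ^ 2) * q ^ ν := by
    rw [← rpow_add hq0, ← rpow_add hq0, ← rpow_add hq0]
    ring_nf
  have hX_exp : X ^ (ν - 1) * X ^ 2 = X ^ ν * X := by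
    rw [← rpow_add_natCast' hX (by push_cast; linarith), ← rpow_add_one' hX (by linarith)]
    push_cast
    ring_nf
  rw [qBessel2_eq_series, qBessel2_eq_series, qBessel2_eq_series, ← hXdef, hqX, mul_pow,
    qBessel2Series_sub_one_q_sq_mul hq0 hq1 hν, mul_rpow hq0.le hX, mul_rpow hq0.le hX]
  set S := qBessel2Series q ν (q ^ 2 * X ^ 2)
  linear_combination (1 - q ^ 2) * S * X ^ (ν - 1) * X ^ 2 * hq_exp +
    (1 - q ^ 2) * S * q ^ (ν ^ 2) * q ^ ν * hX_exp -
    (1 - q) * q ^ (ν ^ 2) * q ^ ν * X ^ ν * S * hu_eq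

/-- `∂^q_u (u^{ν+1} J^{(2)}_{ν-1}(u|q²))
= [2ν]_q u^ν J^{(2)}_{ν-1}(u|q²) - q^{ν+1} u^{ν+1} J^{(2)}_ν(qu|q²)` for `ν > 0`, `u > 0`. -/
theorem qBessel2_qDeriv_corollary (q : ℝ) (hq0 : 0 < q) (hq1 : q < 1)
    (ν : ℝ) (hν : ν > 0) (u : ℝ) (hu0 : 0 < u) :
    qDeriv q (fun s => s ^ (ν + 1) * qBessel2 q (ν - 1) s) u =
      qNum q (2 * ν) * u ^ ν * qBessel2 q (ν - 1) u -
        q ^ (ν + 1) * u ^ (ν + 1) * qBessel2 q ν (q * u) := by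
  have hq_exp : q ^ (ν + 1) * q ^ (ν - 1) = q ^ (2 * ν) := by
    rw [← rpow_add hq0]
    ring_nf
  have hu_exp : u ^ (ν + 1) = u ^ ν * u := rpow_add_one hu0.ne' ν
  have hq_sub_one : q - 1 ≠ 0 := by linarith
  rw [qDeriv, qBessel2_sub_one_q_mul hq0 hq1 hν hu0.le, mul_rpow hq0.le hu0.le, qNum, hu_exp,
    ← hq_exp]
  field_simp
  ring
end
end

section
/- Expansion of a monomial in the q-Laguerre polynomials 𝓛^{(ν)}_i(·|q^{−2}): for every real ν > −1, every j ∈ ℕ and every real t, t^{2j} / ( (1+q)^j [j]_{q²}! ) = ∑_{i=0}^j (−1)^i (q^{2i+2ν+2}; q²)_{j−i} / ( [j−i]_{q²}! (1−q²)^{j−i} ) · q^{(j−i)(j−i+1) + (i+1)(i+2ν+2) − 2(j+1)(j+ν+1)} · 𝓛^{(ν)}_i(q²t²/(1+q)|q^{−2}). -/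
open scoped BigOperators

noncomputable section

/-! Expanding each `𝓛^{(ν)}_i` and collecting the coefficient of `u^k`, the two q-Pochhammer
symbols merge into `(q^{2k+2ν+2}; q²)_{j-k}`, and what is left is
`∑_{a+b=j-k} (-1)^b q^{b(b-1)} / ([a]_{q²}! [b]_{q²}!)`, the coefficient of `x^{j-k}` in
`e_{q²}(x) E_{q²}(-x) = 1`. It vanishes unless `k = j`, by telescoping with the q-Pascal rule
`[a+b]_p = [b]_p + p^b [a]_p`. -/

open Finset

lemma qNum_add {p : ℝ} (hp : 0 < p) (u v : ℝ) : qNum p (u + v) = qNum p u + p ^ u * qNum p v := by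
  simp only [qNum, Real.rpow_add hp]
  ring

lemma qNum_zero (p : ℝ) : qNum p 0 = 0 := by simp [qNum]

lemma qNum_natCast (p : ℝ) (n : ℕ) : qNum p n = (p ^ n - 1) / (p - 1) := by
  rw [qNum, Real.rpow_natCast]

lemma qNum_natCast_ne_zero {p : ℝ} (hp0 : 0 ≤ p) (hp1 : p ≠ 1) {n : ℕ} (hn : n ≠ 0) :
    qNum p n ≠ 0 := by
  rw [qNum_natCast]
  refine div_ne_zero (sub_ne_zero.2 ?_) (sub_ne_zero.2 hp1)
  exact fun h => hp1 ((pow_eq_one_iff_of_nonneg hp0 hn).1 h)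

lemma qFact_succ_s11 (p : ℝ) (n : ℕ) : qFact p (n + 1) = qFact p n * qNum p ↑(n + 1) := by
  rw [qFact, prod_range_succ, Nat.cast_succ, ← qFact]

lemma qFact_ne_zero {p : ℝ} (hp0 : 0 ≤ p) (hp1 : p ≠ 1) (n : ℕ) : qFact p n ≠ 0 :=
  prod_ne_zero_iff.2 fun i _ => by
    simpa using qNum_natCast_ne_zero hp0 hp1 (Nat.succ_ne_zero i)

lemma qPoch_add (a p : ℝ) (m n : ℕ) :
    qPoch a p (m + n) = qPoch a p m * qPoch (a * p ^ m) p n := by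
  simp only [qPoch, prod_range_add, pow_add, mul_assoc]

lemma sum_antidiagonal_neg_one_pow_mul_pow_choose_div_qFact {p : ℝ} (hp0 : 0 < p) (hp1 : p ≠ 1)
    (n : ℕ) :
    ∑ x ∈ antidiagonal n, (-1) ^ x.2 * p ^ x.2.choose 2 / (qFact p x.1 * qFact p x.2) =
      if n = 0 then 1 else 0 := by
  rcases n with _ | n
  · simp [qFact]
  set f : ℕ × ℕ → ℝ := fun x => (-1) ^ x.2 * p ^ x.2.choose 2 / (qFact p x.1 * qFact p x.2)
  set g : ℕ × ℕ → ℝ := fun x => (-1) ^ x.2 * p ^ (x.2 + 1).choose 2 / (qFact p x.1 * qFact p x.2)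
  have hF := qFact_ne_zero hp0.le hp1
  have hN : ∀ k : ℕ, qNum p ↑(k + 1) ≠ 0 := fun k =>
    qNum_natCast_ne_zero hp0.le hp1 k.succ_ne_zero
  have hpascal : ∀ x ∈ antidiagonal (n + 1),
      qNum p ↑(n + 1) * f x = qNum p x.2 * f x + p ^ x.2 * qNum p x.1 * f x := by
    intro x hx
    rw [← mem_antidiagonal.1 hx, add_comm x.1, Nat.cast_add, qNum_add hp0, Real.rpow_natCast]
    ring
  have hlast : ∑ x ∈ antidiagonal (n + 1), qNum p x.2 * f x = -∑ x ∈ antidiagonal n, g x := by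
    rw [Nat.sum_antidiagonal_succ', ← sum_neg_distrib, Nat.cast_zero, qNum_zero, zero_mul,
      zero_add]
    refine sum_congr rfl fun x _ => ?_
    have := hF x.1
    have := hF x.2
    have := hN x.2
    simp only [f, g, qFact_succ_s11]
    field_simp
    ring
  have hfirst :
      ∑ x ∈ antidiagonal (n + 1), p ^ x.2 * qNum p x.1 * f x = ∑ x ∈ antidiagonal n, g x := by
    rw [Nat.sum_antidiagonal_succ, Nat.cast_zero, qNum_zero, mul_zero, zero_mul, zero_add]
    refine sum_congr rfl fun x _ => ?_
    have := hF x.1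
    have := hF x.2
    have := hN x.1
    simp only [f, g, qFact_succ_s11, Nat.choose_succ_succ', Nat.choose_one_right]
    field_simp
    ring
  rw [if_neg n.succ_ne_zero, ← mul_right_inj' (hN n), mul_zero, mul_sum,
    sum_congr rfl hpascal, sum_add_distrib, hlast, hfirst, neg_add_cancel]

lemma sum_range_neg_one_pow_mul_pow_div_qFact_sq {q : ℝ} (hq0 : 0 < q) (hq1 : q ≠ 1) (n : ℕ) :
    ∑ m ∈ range (n + 1), (-1) ^ m * q ^ ((n - m) * (n - m + 1) + 2 * m) /
        (qFact (q ^ 2) (n - m) * qFact (q ^ 2) m) =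
      if n = 0 then 1 else 0 := by
  have hterm : ∀ x ∈ antidiagonal n,
      (-1) ^ x.1 * q ^ (x.2 * (x.2 + 1) + 2 * x.1) / (qFact (q ^ 2) x.2 * qFact (q ^ 2) x.1) =
        (-1) ^ n * (q ^ 2) ^ n *
          ((-1) ^ x.2 * (q ^ 2) ^ x.2.choose 2 / (qFact (q ^ 2) x.1 * qFact (q ^ 2) x.2)) := by
    intro x hx
    have hchoose : x.2 * (x.2 + 1) = 2 * x.2.choose 2 + 2 * x.2 := by
      have := Nat.add_one_mul_choose_eq x.2 1
      rw [Nat.choose_succ_succ', Nat.choose_one_right] at this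
      linarith
    have hsign : (-1 : ℝ) ^ n * (-1) ^ x.2 = (-1) ^ x.1 := by
      rw [← mem_antidiagonal.1 hx, pow_add, mul_assoc, ← mul_pow]
      norm_num
    rw [← mem_antidiagonal.1 hx] at hsign ⊢
    rw [← hsign, hchoose]
    ring
  have hq2 : q ^ 2 ≠ 1 := fun h => hq1 ((pow_eq_one_iff_of_nonneg hq0.le two_ne_zero).1 h)
  rw [← Nat.sum_antidiagonal_eq_sum_range_succ (fun m a => (-1) ^ m * q ^ (a * (a + 1) + 2 * m) /
      (qFact (q ^ 2) a * qFact (q ^ 2) m)), sum_congr rfl hterm, ← mul_sum,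
    sum_antidiagonal_neg_one_pow_mul_pow_choose_div_qFact (by positivity) hq2]
  split_ifs with hn <;> simp [hn]

lemma sum_range_diag_flip_add {M : Type*} [AddCommMonoid M] (n : ℕ) (F : ℕ → ℕ → M) :
    ∑ i ∈ range (n + 1), ∑ k ∈ range (i + 1), F i k =
      ∑ k ∈ range (n + 1), ∑ m ∈ range (n - k + 1), F (k + m) k := by
  calc _ = ∑ i ∈ range (n + 1), ∑ k ∈ range (i + 1), F (k + (i - k)) k :=
        sum_congr rfl fun i _ => sum_congr rfl fun k hk => by
          rw [add_tsub_cancel_of_le (Nat.lt_succ_iff.1 (mem_range.1 hk))]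
    _ = ∑ k ∈ range (n + 1), ∑ m ∈ range (n + 1 - k), F (k + m) k :=
        sum_range_diag_flip _ fun k m => F (k + m) k
    _ = _ := sum_congr rfl fun k hk => by
        rw [Nat.sub_add_comm (Nat.lt_succ_iff.1 (mem_range.1 hk))]

/-- The `(i, k) = (k + m, k)` summand of the expanded right-hand side, split into a factor free of
`m` and the `m`-th term of `sum_range_neg_one_pow_mul_pow_div_qFact_sq`. -/
lemma monomial_qLaguerreInv_expansion_term {q : ℝ} (hq0 : 0 < q) (ν u : ℝ) {j k m : ℕ}
    (hj : k + m ≤ j) :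
    (-1) ^ (k + m) * qPoch (q ^ (2 * ((k + m : ℕ) : ℝ) + 2 * ν + 2)) (q ^ 2) (j - (k + m)) /
          (qFact (q ^ 2) (j - (k + m)) * (1 - q ^ 2) ^ (j - (k + m))) *
        q ^ (((j : ℝ) - ((k + m : ℕ) : ℝ)) * ((j : ℝ) - ((k + m : ℕ) : ℝ) + 1) +
              (((k + m : ℕ) : ℝ) + 1) * (((k + m : ℕ) : ℝ) + 2 * ν + 2) -
              2 * ((j : ℝ) + 1) * ((j : ℝ) + ν + 1)) *
        (q ^ (-((k + m : ℕ) : ℝ) * (((k + m : ℕ) : ℝ) + 1 + 2 * ν)) *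
          (q ^ (2 * (k : ℝ) * ((k : ℝ) + ν)) * (-u) ^ k /
              (qFact (q ^ 2) (k + m - k) * qFact (q ^ 2) k) *
            (qPoch (q ^ (2 * (k : ℝ) + 2 * ν + 2)) (q ^ 2) (k + m - k) /
              (1 - q ^ 2) ^ (k + m - k)))) =
      (-1) ^ k * (-u) ^ k / qFact (q ^ 2) k *
          (qPoch (q ^ (2 * (k : ℝ) + 2 * ν + 2)) (q ^ 2) (j - k) / (1 - q ^ 2) ^ (j - k)) *
          q ^ (2 * (k : ℝ) + 2 * ν + 2 + 2 * (k : ℝ) * ((k : ℝ) + ν) -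
            2 * ((j : ℝ) + 1) * ((j : ℝ) + ν + 1)) *
        ((-1) ^ m * q ^ ((j - k - m) * (j - k - m + 1) + 2 * m) /
          (qFact (q ^ 2) (j - k - m) * qFact (q ^ 2) m)) := by
  obtain ⟨r, rfl⟩ := Nat.exists_eq_add_of_le hj
  set a : ℝ := q ^ (2 * (k : ℝ) + 2 * ν + 2)
  have hshift : q ^ (2 * ((k + m : ℕ) : ℝ) + 2 * ν + 2) = a * (q ^ 2) ^ m := by
    rw [← pow_mul, ← Real.rpow_natCast, ← Real.rpow_add hq0]
    push_cast
    ring_nf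
  have hexp : q ^ ((((k + m + r : ℕ) : ℝ) - ((k + m : ℕ) : ℝ)) *
        (((k + m + r : ℕ) : ℝ) - ((k + m : ℕ) : ℝ) + 1) +
        (((k + m : ℕ) : ℝ) + 1) * (((k + m : ℕ) : ℝ) + 2 * ν + 2) -
        2 * (((k + m + r : ℕ) : ℝ) + 1) * (((k + m + r : ℕ) : ℝ) + ν + 1)) =
      q ^ (2 * (k : ℝ) + 2 * ν + 2 + 2 * (k : ℝ) * ((k : ℝ) + ν) -
          2 * (((k + m + r : ℕ) : ℝ) + 1) * (((k + m + r : ℕ) : ℝ) + ν + 1)) *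
        q ^ (r * (r + 1) + 2 * m) /
        (q ^ (-((k + m : ℕ) : ℝ) * (((k + m : ℕ) : ℝ) + 1 + 2 * ν)) *
          q ^ (2 * (k : ℝ) * ((k : ℝ) + ν))) := by
    rw [eq_div_iff (by positivity), ← Real.rpow_natCast, ← Real.rpow_add hq0,
      ← Real.rpow_add hq0, ← Real.rpow_add hq0]
    push_cast
    ring_nf
  rw [add_tsub_cancel_left, add_tsub_cancel_left, add_assoc k m r, add_tsub_cancel_left,
    add_tsub_cancel_left, ← add_assoc, hshift, hexp, add_assoc, qPoch_add, pow_add (1 - q ^ 2) m r]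
  field_simp
  ring

lemma monomial_qLaguerreInv_expansion_coeff {q : ℝ} (hq0 : 0 < q) (hq1 : q ≠ 1) (ν u : ℝ)
    {j k : ℕ} (hkj : k ≤ j) :
    ∑ m ∈ range (j - k + 1),
      (-1) ^ (k + m) * qPoch (q ^ (2 * ((k + m : ℕ) : ℝ) + 2 * ν + 2)) (q ^ 2) (j - (k + m)) /
          (qFact (q ^ 2) (j - (k + m)) * (1 - q ^ 2) ^ (j - (k + m))) *
        q ^ (((j : ℝ) - ((k + m : ℕ) : ℝ)) * ((j : ℝ) - ((k + m : ℕ) : ℝ) + 1) +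
              (((k + m : ℕ) : ℝ) + 1) * (((k + m : ℕ) : ℝ) + 2 * ν + 2) -
              2 * ((j : ℝ) + 1) * ((j : ℝ) + ν + 1)) *
        (q ^ (-((k + m : ℕ) : ℝ) * (((k + m : ℕ) : ℝ) + 1 + 2 * ν)) *
          (q ^ (2 * (k : ℝ) * ((k : ℝ) + ν)) * (-u) ^ k /
              (qFact (q ^ 2) (k + m - k) * qFact (q ^ 2) k) *
            (qPoch (q ^ (2 * (k : ℝ) + 2 * ν + 2)) (q ^ 2) (k + m - k) /
              (1 - q ^ 2) ^ (k + m - k)))) =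
      if k = j then (u / q ^ 2) ^ j / qFact (q ^ 2) j else 0 := by
  rw [sum_congr rfl fun m hm => monomial_qLaguerreInv_expansion_term hq0 ν u
      (by have := mem_range.1 hm; omega), ← mul_sum,
    sum_range_neg_one_pow_mul_pow_div_qFact_sq hq0 hq1]
  rcases eq_or_lt_of_le hkj with rfl | hlt
  · have hpow : q ^ (2 * (k : ℝ) + 2 * ν + 2 + 2 * (k : ℝ) * ((k : ℝ) + ν) -
        2 * ((k : ℝ) + 1) * ((k : ℝ) + ν + 1)) = ((q ^ 2) ^ k)⁻¹ := by
      rw [← pow_mul, ← Real.rpow_natCast, ← Real.rpow_neg hq0.le]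
      push_cast
      ring_nf
    rw [hpow, if_pos rfl, if_pos (Nat.sub_self k), Nat.sub_self, qPoch, range_zero, prod_empty,
      pow_zero, div_one, mul_one, mul_one, ← mul_pow, neg_one_mul, neg_neg, div_pow]
    ring
  · rw [if_neg (by omega), if_neg hlt.ne, mul_zero]

theorem monomial_qLaguerreInv_expansion_general (q : ℝ) (hq0 : 0 < q) (hq1 : q < 1)
    (ν : ℝ) (j : ℕ) (t : ℝ) :
    t ^ (2 * j) / ((1 + q) ^ j * qFact (q ^ 2) j) =
      ∑ i ∈ Finset.range (j + 1),
        (-1 : ℝ) ^ i * qPoch (q ^ (2 * (i : ℝ) + 2 * ν + 2)) (q ^ 2) (j - i) /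
            (qFact (q ^ 2) (j - i) * (1 - q ^ 2) ^ (j - i)) *
          q ^ (((j : ℝ) - (i : ℝ)) * ((j : ℝ) - (i : ℝ) + 1) +
                ((i : ℝ) + 1) * ((i : ℝ) + 2 * ν + 2) -
                2 * ((j : ℝ) + 1) * ((j : ℝ) + ν + 1)) *
          qLaguerreInv q ν i (q ^ 2 * t ^ 2 / (1 + q)) := by
  simp only [qLaguerreInv, mul_sum]
  rw [sum_range_diag_flip_add, sum_congr rfl fun k hk => monomial_qLaguerreInv_expansion_coeff
      hq0 hq1.ne ν _ (Nat.lt_succ_iff.1 (mem_range.1 hk)), sum_ite_eq',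
    if_pos (self_mem_range_succ j), mul_div_assoc, mul_div_cancel_left₀ _ (by positivity),
    div_pow, ← pow_mul, div_div]

/-- expansion of a monomial in the q-Laguerre polynomials `𝓛^{(ν)}_i(·|q^{-2})`:
for `ν > -1`, `j ∈ ℕ` and every real `t`,
`t^{2j}/((1+q)^j [j]_{q²}!) = ∑_{i=0}^j (-1)^i (q^{2i+2ν+2};q²)_{j-i}/([j-i]_{q²}! (1-q²)^{j-i})
  · q^{(j-i)(j-i+1)+(i+1)(i+2ν+2)-2(j+1)(j+ν+1)} 𝓛^{(ν)}_i(q²t²/(1+q)|q^{-2})`. -/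
theorem monomial_qLaguerreInv_expansion (q : ℝ) (hq0 : 0 < q) (hq1 : q < 1)
    (ν : ℝ) (hν : ν > -1) (j : ℕ) (t : ℝ) :
    t ^ (2 * j) / ((1 + q) ^ j * qFact (q ^ 2) j) =
      ∑ i ∈ Finset.range (j + 1),
        (-1 : ℝ) ^ i * qPoch (q ^ (2 * (i : ℝ) + 2 * ν + 2)) (q ^ 2) (j - i) /
            (qFact (q ^ 2) (j - i) * (1 - q ^ 2) ^ (j - i)) *
          q ^ (((j : ℝ) - (i : ℝ)) * ((j : ℝ) - (i : ℝ) + 1) +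
                ((i : ℝ) + 1) * ((i : ℝ) + 2 * ν + 2) -
                2 * ((j : ℝ) + 1) * ((j : ℝ) + ν + 1)) *
          qLaguerreInv q ν i (q ^ 2 * t ^ 2 / (1 + q)) :=
  monomial_qLaguerreInv_expansion_general q hq0 hq1 ν j t
end
end
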